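/- arXiv:2605.03493 — 7 statements merged into one kernel-verified Lean document; each statement's English description precedes it below -/
import Mathlib

section
/- Regret of Exp3-SET. Fix N actions and T rounds. An oblivious adversary fixes, for every round t, a loss vector ℓ_t ∈ [0,1]^N and an undirected graph G_t on the node set [N] (every node is considered adjacent to itself, so the learner always observes its own loss). Exp3-SET maintains loss estimates: at round t it draws I_t from the distribution p_t with p_{t,i} ∝ exp(−η·Σ_{s<t} ℓ̂_{s,i}), observes ℓ_{t,j} for all j in the closed neighborhood of I_t in G_t, and sets ℓ̂_{t,i} = ℓ_{t,i}·1{i ∈ N_t[I_t]} / o_{t,i} where N_t[i] is the closed neighborhood of i in G_t and o_{t,i} = Σ_{j∈N_t[i]} p_{t,j}. If the learning rate is set to η = √( 2·log N / Σ_{t=1}^T α_t ), where α_t is the independence number of G_t, then the expected regret satisfies R_T = max_{k∈[N]} E[ Σ_{t=1}^T ( ℓ_{t,I_t} − ℓ_{t,k} ) ] ≤ √( 2·( Σ_{t=1}^T α_t )·log N ). -/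
/-- The independence number of the (undirected) graph on `Fin N` with adjacency
predicate `Adj`: the maximum cardinality of a set of vertices no two (distinct)
of which are adjacent. -/
def independenceNumber (N : ℕ) (Adj : Fin N → Fin N → Bool) : ℕ :=
  Finset.sup
    ((Finset.univ : Finset (Fin N)).powerset.filter
      fun S => ∀ a ∈ S, ∀ b ∈ S, a ≠ b → Adj a b = false)
    Finset.card

/-- One step of the Exp3-SET expected-loss recursion.
`exp3setExpectedLoss N η ℓ Adj n t Lhat` is the expected total loss incurred by
Exp3-SET (with learning rate `η`, losses `ℓ`, observation graphs given by `Adj`,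
every node adjacent to itself for observation purposes) over the `n` rounds
`t, t+1, …, t+n−1`, starting from the vector `Lhat` of cumulative loss estimates.
At each round the algorithm draws `I` from the exponential-weights distribution
`p i ∝ exp(−η Lhat i)`, incurs `ℓ t I`, observes the losses in the closed
neighborhood of `I`, and updates the estimates by
`ℓ̂ i = ℓ t i · 1{i ∈ N_t[I]} / o_i` with `o_i = Σ_{j ∈ N_t[i]} p j`. -/
noncomputable def exp3setExpectedLoss (N : ℕ) (η : ℝ) (ℓ : ℕ → Fin N → ℝ)
    (Adj : ℕ → Fin N → Fin N → Bool) :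
    ℕ → ℕ → (Fin N → ℝ) → ℝ
  | 0, _, _ => 0
  | n + 1, t, Lhat =>
      let p : Fin N → ℝ :=
        fun i => Real.exp (-η * Lhat i) / ∑ j, Real.exp (-η * Lhat j)
      let o : Fin N → ℝ :=
        fun i => ∑ j, if i = j ∨ Adj t i j = true then p j else 0
      ∑ I, p I *
        (ℓ t I +
          exp3setExpectedLoss N η ℓ Adj n (t + 1)
            (fun i => Lhat i + if i = I ∨ Adj t I i = true then ℓ t i / o i else 0))

/-!
The potential `Φ(L) = η⁻¹ log ∑ⱼ exp(-η Lⱼ)` of the cumulative loss estimates `L` decreases in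
each round by at least the expected estimated loss of the draw, up to `η/2` times the second moment
of the estimates (from `e^{-y} ≤ 1 - y + y²/2`). The estimates are unbiased, and their second
moment is at most `∑ᵢ pᵢ / oᵢ`, which a greedy choice of an independent set bounds by the
independence number `αₜ`. Telescoping from `Φ(0) = log N / η` down to `Φ(L) ≥ -L k` bounds the
regret against `k` by `log N / η + (η / 2) ∑ₜ αₜ`, which the tuned `η` makes `√(2 (∑ₜ αₜ) log N)`.
-/

open Finset

lemma Real.exp_neg_le_one_sub_add_sq_div_two {x : ℝ} (hx : 0 ≤ x) :
    Real.exp (-x) ≤ 1 - x + x ^ 2 / 2 := by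
  -- `(1 - x + x²/2) (1 + x + x²/2) = 1 + x⁴/4 ≥ 1`
  have hquad := Real.quadratic_le_exp_of_nonneg hx
  have hinv : Real.exp (-x) * Real.exp x = 1 := by rw [← Real.exp_add, neg_add_cancel, Real.exp_zero]
  nlinarith [Real.exp_pos (-x), Real.exp_pos x, sq_nonneg (x - 1), pow_nonneg hx 4]

section IndependentSets

variable {α : Type*} [DecidableEq α]

def IsIndepFinset (A : α → α → Bool) (S : Finset α) : Prop :=
  ∀ a ∈ S, ∀ b ∈ S, a ≠ b → A a b = false

lemma IsIndepFinset.insert {A : α → α → Bool} (hsym : ∀ i j, A i j = A j i) {S : Finset α}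
    (hS : IsIndepFinset A S) {v : α} (hv : ∀ b ∈ S, A v b = false) :
    IsIndepFinset A (insert v S) := by
  intro a ha b hb hab
  rw [mem_insert] at ha hb
  rcases ha with rfl | ha <;> rcases hb with rfl | hb
  · exact absurd rfl hab
  · exact hv b hb
  · rw [hsym]; exact hv a ha
  · exact hS a ha b hb hab

/-- The greedy argument of Alon et al.: repeatedly pick the vertex of least closed-neighbourhood
mass and discard its neighbourhood. -/
theorem exists_isIndepFinset_sum_div_le (A : α → α → Bool) (hsym : ∀ i j, A i j = A j i)
    {p : α → ℝ} (hp : ∀ i, 0 < p i) (s : Finset α) :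
    ∃ S ⊆ s, IsIndepFinset A S ∧
      ∑ i ∈ s, p i / ∑ j ∈ s with (i = j ∨ A i j = true), p j ≤ S.card := by
  induction s using Finset.strongInduction with
  | _ s ih =>
  rcases s.eq_empty_or_nonempty with rfl | hs
  · exact ⟨∅, subset_refl _, fun _ h => absurd h (notMem_empty _), by simp⟩
  set O : Finset α → α → ℝ := fun s i => ∑ j ∈ s with (i = j ∨ A i j = true), p j
  have hO_pos : ∀ {s i}, i ∈ s → 0 < O s i := fun hi =>
    sum_pos (fun j _ => hp j) ⟨_, mem_filter.2 ⟨hi, Or.inl rfl⟩⟩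
  obtain ⟨v, hv, hmin⟩ := s.exists_min_image (O s) hs
  set B := s.filter fun j => ¬(v = j ∨ A v j = true)
  have hBs : B ⊂ s := filter_ssubset.2 ⟨v, hv, by simp⟩
  obtain ⟨S, hSB, hS, hsum⟩ := ih B hBs
  have hnbhd : ∑ i ∈ s with (v = i ∨ A v i = true), p i / O s i ≤ 1 :=
    calc _ ≤ ∑ i ∈ s with (v = i ∨ A v i = true), p i / O s v :=
          sum_le_sum fun i hi => div_le_div_of_nonneg_left (hp i).le (hO_pos hv)
            (hmin i (mem_filter.1 hi).1)
      _ = 1 := by rw [← sum_div]; exact div_self (hO_pos hv).ne'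
  have hrest : ∑ i ∈ B, p i / O s i ≤ ∑ i ∈ B, p i / O B i :=
    sum_le_sum fun i hi => div_le_div_of_nonneg_left (hp i).le (hO_pos hi)
      (sum_le_sum_of_subset_of_nonneg (filter_subset_filter _ hBs.subset)
        fun j _ _ => (hp j).le)
  have hvS : v ∉ S := fun h => by simpa [B] using hSB h
  refine ⟨insert v S, insert_subset hv (hSB.trans hBs.subset),
    hS.insert hsym fun b hb => Bool.eq_false_iff.2 (not_or.1 (mem_filter.1 (hSB hb)).2).2, ?_⟩
  rw [card_insert_of_notMem hvS, Nat.cast_succ, ← sum_filter_add_sum_filter_not s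
    (fun i => v = i ∨ A v i = true)]
  linarith

lemma card_le_independenceNumber {N : ℕ} {A : Fin N → Fin N → Bool} {S : Finset (Fin N)}
    (hS : IsIndepFinset A S) : S.card ≤ independenceNumber N A :=
  Finset.le_sup (f := Finset.card) (mem_filter.2 ⟨mem_powerset.2 (subset_univ S), hS⟩)

lemma one_le_independenceNumber {N : ℕ} (A : Fin N → Fin N → Bool) (i : Fin N) :
    1 ≤ independenceNumber N A :=
  card_le_independenceNumber (S := {i}) fun _ ha _ hb hab =>
    absurd ((mem_singleton.1 ha).trans (mem_singleton.1 hb).symm) hab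


lemma sum_div_sum_closedNbhd_le_independenceNumber {N : ℕ} (A : Fin N → Fin N → Bool)
    (hsym : ∀ i j, A i j = A j i) {p : Fin N → ℝ} (hp : ∀ i, 0 < p i) :
    ∑ i, p i / ∑ j, (if i = j ∨ A i j = true then p j else 0) ≤ independenceNumber N A := by
  obtain ⟨S, -, hS, hsum⟩ := exists_isIndepFinset_sum_div_le A hsym hp univ
  simp only [← sum_filter]
  exact hsum.trans (by exact_mod_cast card_le_independenceNumber hS)

end IndependentSets

section ExponentialWeights

variable {ι : Type*} [Fintype ι]

noncomputable def expWeights (η : ℝ) (L : ι → ℝ) (i : ι) : ℝ :=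
  Real.exp (-η * L i) / ∑ j, Real.exp (-η * L j)

noncomputable def expPotential (η : ℝ) (L : ι → ℝ) : ℝ :=
  Real.log (∑ j, Real.exp (-η * L j)) / η

lemma sum_exp_pos [Nonempty ι] (η : ℝ) (L : ι → ℝ) : 0 < ∑ j, Real.exp (-η * L j) :=
  sum_pos (fun _ _ => Real.exp_pos _) univ_nonempty

lemma expWeights_pos [Nonempty ι] (η : ℝ) (L : ι → ℝ) (i : ι) : 0 < expWeights η L i :=
  div_pos (Real.exp_pos _) (sum_exp_pos η L)

lemma sum_expWeights [Nonempty ι] (η : ℝ) (L : ι → ℝ) : ∑ i, expWeights η L i = 1 := by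
  simp only [expWeights]
  rw [← sum_div, div_self (sum_exp_pos η L).ne']

lemma neg_le_expPotential {η : ℝ} (hη : 0 < η) (L : ι → ℝ) (k : ι) :
    -L k ≤ expPotential η L := by
  have : Nonempty ι := ⟨k⟩
  have hle : Real.exp (-η * L k) ≤ ∑ j, Real.exp (-η * L j) :=
    single_le_sum (fun j _ => (Real.exp_pos (-η * L j)).le) (mem_univ k)
  rw [expPotential, le_div_iff₀ hη]
  calc -L k * η = Real.log (Real.exp (-η * L k)) := by rw [Real.log_exp]; ring
    _ ≤ _ := Real.log_le_log (Real.exp_pos _) hle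

/-- Hedge's potential inequality: the second-order bound `e^{-y} ≤ 1 - y + y²/2` on nonnegative
losses together with `log q ≤ q - 1`. -/
lemma expPotential_add_le [Nonempty ι] {η : ℝ} (hη : 0 < η) (L : ι → ℝ) {x : ι → ℝ}
    (hx : ∀ i, 0 ≤ x i) :
    expPotential η (L + x) ≤ expPotential η L - ∑ j, expWeights η L j * x j
      + η / 2 * ∑ j, expWeights η L j * x j ^ 2 := by
  set p := expWeights η L
  set q := ∑ j, p j * Real.exp (-η * x j)
  have hfactor : ∑ j, Real.exp (-η * (L + x) j) = (∑ j, Real.exp (-η * L j)) * q := by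
    simp only [q, p, expWeights, mul_sum, Pi.add_apply, mul_add, Real.exp_add]
    refine sum_congr rfl fun j _ => ?_
    field_simp [(sum_exp_pos η L).ne']
  have hq_pos : 0 < q := sum_pos (fun j _ => mul_pos (expWeights_pos η L j) (Real.exp_pos _))
    univ_nonempty
  have hq_le : q ≤ 1 - η * ∑ j, p j * x j + η ^ 2 / 2 * ∑ j, p j * x j ^ 2 :=
    calc q ≤ ∑ j, p j * (1 - η * x j + (η * x j) ^ 2 / 2) :=
          sum_le_sum fun j _ => mul_le_mul_of_nonneg_left
            (by simpa only [neg_mul] using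
              Real.exp_neg_le_one_sub_add_sq_div_two (mul_nonneg hη.le (hx j)))
            (expWeights_pos η L j).le
      _ = ∑ j, p j - η * ∑ j, p j * x j + η ^ 2 / 2 * ∑ j, p j * x j ^ 2 := by
          simp only [mul_sum, ← sum_sub_distrib, ← sum_add_distrib]
          exact sum_congr rfl fun j _ => by ring
      _ = _ := by rw [sum_expWeights]
  have hlog : Real.log q ≤ -η * ∑ j, p j * x j + η ^ 2 / 2 * ∑ j, p j * x j ^ 2 := by
    linarith [Real.log_le_sub_one_of_pos hq_pos]
  rw [expPotential, expPotential, hfactor, Real.log_mul (sum_exp_pos η L).ne' hq_pos.ne',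
    add_div]
  have : Real.log q / η ≤ (-η * ∑ j, p j * x j + η ^ 2 / 2 * ∑ j, p j * x j ^ 2) / η :=
    div_le_div_of_nonneg_right hlog hη.le
  rw [show (-η * ∑ j, p j * x j + η ^ 2 / 2 * ∑ j, p j * x j ^ 2) / η
    = -∑ j, p j * x j + η / 2 * ∑ j, p j * x j ^ 2 by field_simp] at this
  linarith

variable [DecidableEq ι]

noncomputable def obsProb (A : ι → ι → Bool) (p : ι → ℝ) (i : ι) : ℝ :=
  ∑ j, if i = j ∨ A i j = true then p j else 0

noncomputable def lossEstimate (A : ι → ι → Bool) (ℓ p : ι → ℝ) (I i : ι) : ℝ :=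
  if i = I ∨ A I i = true then ℓ i / obsProb A p i else 0

lemma le_obsProb (A : ι → ι → Bool) {p : ι → ℝ} (hp : ∀ i, 0 ≤ p i) (i : ι) :
    p i ≤ obsProb A p i := by
  refine le_trans (by simp) (single_le_sum (f := fun j => if i = j ∨ A i j = true then p j else 0)
    (fun j _ => ?_) (mem_univ i))
  split
  · exact hp j
  · exact le_rfl

lemma lossEstimate_nonneg (A : ι → ι → Bool) {ℓ p : ι → ℝ} (hℓ : ∀ i, 0 ≤ ℓ i)
    (hp : ∀ i, 0 ≤ p i) (I i : ι) : 0 ≤ lossEstimate A ℓ p I i := by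
  unfold lossEstimate
  split
  · exact div_nonneg (hℓ i) ((hp i).trans (le_obsProb A hp i))
  · exact le_rfl

/-- Averaging over the played action `I ∼ p`, the estimate of coordinate `c` is nonzero exactly
when `I` lies in the neighbourhood of `c`, which has mass `obsProb A p c` by symmetry. -/
lemma sum_mul_comp_lossEstimate (A : ι → ι → Bool) (hsym : ∀ i j, A i j = A j i)
    (ℓ p : ι → ℝ) (g : ℝ → ℝ) (hg : g 0 = 0) (c : ι) :
    ∑ I, p I * g (lossEstimate A ℓ p I c) = obsProb A p c * g (ℓ c / obsProb A p c) := by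
  simp only [lossEstimate, obsProb, apply_ite g, hg, sum_mul, ite_mul, zero_mul,
    hsym _ c, mul_comm (p _)]

/-- The loss estimates are unbiased under `I ∼ p`, and their second moment at `c` is
`ℓ c ^ 2 / obsProb A p c ≤ 1 / obsProb A p c`. -/
lemma sum_expWeights_mul_round_le {η : ℝ} (hη : 0 < η) (A : ι → ι → Bool)
    (hsym : ∀ i j, A i j = A j i) {ℓ : ι → ℝ} (hℓ : ∀ i, ℓ i ∈ Set.Icc (0 : ℝ) 1)
    (L : ι → ℝ) (k : ι) :
    ∑ I, expWeights η L I * (ℓ I + expPotential η (L + lossEstimate A ℓ (expWeights η L) I)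
        + lossEstimate A ℓ (expWeights η L) I k)
      ≤ expPotential η L + ℓ k
        + η / 2 * ∑ i, expWeights η L i / obsProb A (expWeights η L) i := by
  have : Nonempty ι := ⟨k⟩
  set p := expWeights η L
  set x := lossEstimate A ℓ p
  have hp : ∀ i, 0 < p i := expWeights_pos η L
  have ho : ∀ i, 0 < obsProb A p i := fun i => (hp i).trans_le (le_obsProb A (hp · |>.le) i)
  have hmean : ∀ c, ∑ I, p I * x I c = ℓ c := fun c => by
    simpa [mul_div_cancel₀ _ (ho c).ne'] using
      sum_mul_comp_lossEstimate A hsym ℓ p id rfl c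
  have hsecond : ∀ c, ∑ I, p I * x I c ^ 2 ≤ 1 / obsProb A p c := fun c => by
    rw [sum_mul_comp_lossEstimate A hsym ℓ p (· ^ 2) (zero_pow two_ne_zero) c, div_pow,
      mul_div_assoc', sq (obsProb A p c), mul_div_mul_left _ _ (ho c).ne']
    exact div_le_div_of_nonneg_right (pow_le_one₀ (hℓ c).1 (hℓ c).2) (ho c).le
  have hswap : ∀ f : ι → ι → ℝ, ∑ I, p I * ∑ j, p j * f I j = ∑ j, p j * ∑ I, p I * f I j :=
    fun f => by
      simp only [mul_sum]
      rw [sum_comm]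
      exact sum_congr rfl fun _ _ => sum_congr rfl fun _ _ => by ring
  calc _ ≤ ∑ I, p I * (ℓ I + (expPotential η L - ∑ j, p j * x I j
          + η / 2 * ∑ j, p j * x I j ^ 2) + x I k) :=
        sum_le_sum fun I _ => mul_le_mul_of_nonneg_left (by
          gcongr
          exact expPotential_add_le hη L (lossEstimate_nonneg A (hℓ · |>.1) (hp · |>.le) I))
          (hp I).le
    _ = ∑ I, (p I * ℓ I + expPotential η L * p I - p I * ∑ j, p j * x I j
          + η / 2 * (p I * ∑ j, p j * x I j ^ 2) + p I * x I k) :=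
        sum_congr rfl fun I _ => by ring
    _ = expPotential η L + ∑ I, p I * x I k
          + η / 2 * ∑ j, p j * ∑ I, p I * x I j ^ 2 := by
        have hswap₂ : ∑ I, p I * ∑ j, p j * x I j ^ 2 = ∑ j, p j * ∑ I, p I * x I j ^ 2 :=
          hswap fun I j => x I j ^ 2
        rw [sum_add_distrib, sum_add_distrib, sum_sub_distrib, sum_add_distrib, ← mul_sum,
          ← mul_sum, hswap x, hswap₂, sum_expWeights]
        simp only [hmean]
        ring
    _ ≤ expPotential η L + ℓ k + η / 2 * ∑ i, p i / obsProb A p i := by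
        rw [hmean]
        gcongr with j
        exact (mul_le_mul_of_nonneg_left (hsecond j) (hp j).le).trans_eq (mul_one_div _ _)

end ExponentialWeights

section Exp3Set

variable {N : ℕ} {η : ℝ} {ℓ : ℕ → Fin N → ℝ} {Adj : ℕ → Fin N → Fin N → Bool}

lemma exp3setExpectedLoss_succ (n t : ℕ) (L : Fin N → ℝ) :
    exp3setExpectedLoss N η ℓ Adj (n + 1) t L = ∑ I, expWeights η L I * (ℓ t I +
      exp3setExpectedLoss N η ℓ Adj n (t + 1)
        (L + lossEstimate (Adj t) (ℓ t) (expWeights η L) I)) :=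
  rfl

theorem exp3setExpectedLoss_le (hη : 0 < η) (hℓ : ∀ t i, ℓ t i ∈ Set.Icc (0 : ℝ) 1)
    (hsym : ∀ t i j, Adj t i j = Adj t j i) (k : Fin N) (n t : ℕ) (L : Fin N → ℝ) :
    exp3setExpectedLoss N η ℓ Adj n t L ≤ expPotential η L + L k
      + ∑ s ∈ Ico t (t + n), (ℓ s k + η / 2 * independenceNumber N (Adj s)) := by
  induction n generalizing t L with
  | zero =>
    simp only [exp3setExpectedLoss, add_zero, Ico_self, sum_empty]
    linarith [neg_le_expPotential hη L k]
  | succ n ih =>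
    have : Nonempty (Fin N) := ⟨k⟩
    set p := expWeights η L
    set x := lossEstimate (Adj t) (ℓ t) p
    set C := ∑ s ∈ Ico (t + 1) (t + 1 + n), (ℓ s k + η / 2 * independenceNumber N (Adj s))
    have hp : ∀ i, 0 < p i := expWeights_pos η L
    have hp_sum : ∑ i, p i = 1 := sum_expWeights η L
    rw [exp3setExpectedLoss_succ, show t + (n + 1) = t + 1 + n by omega,
      sum_eq_sum_Ico_succ_bot (show t < t + 1 + n by omega)]
    calc _ ≤ ∑ I, p I * (ℓ t I + (expPotential η (L + x I) + (L + x I) k + C)) :=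
          sum_le_sum fun I _ => mul_le_mul_of_nonneg_left (by gcongr; exact ih _ _) (hp I).le
      _ = ∑ I, p I * (ℓ t I + expPotential η (L + x I) + x I k) + (L k + C) := by
          simp only [Pi.add_apply, mul_add, sum_add_distrib, ← sum_mul, hp_sum]
          ring
      _ ≤ expPotential η L + ℓ t k + η / 2 * ∑ i, p i / obsProb (Adj t) p i + (L k + C) := by
          gcongr
          exact sum_expWeights_mul_round_le hη (Adj t) (hsym t) (hℓ t) L k
      _ ≤ expPotential η L + ℓ t k + η / 2 * independenceNumber N (Adj t) + (L k + C) := by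
          gcongr
          exact sum_div_sum_closedNbhd_le_independenceNumber (Adj t) (hsym t) hp
      _ = _ := by ring

end Exp3Set

lemma exp3setExpectedLoss_fin_one {η : ℝ} {ℓ : ℕ → Fin 1 → ℝ} {Adj : ℕ → Fin 1 → Fin 1 → Bool}
    (n t : ℕ) (L : Fin 1 → ℝ) :
    exp3setExpectedLoss 1 η ℓ Adj n t L = ∑ s ∈ Ico t (t + n), ℓ s 0 := by
  induction n generalizing t L with
  | zero => simp [exp3setExpectedLoss]
  | succ n ih =>
    rw [exp3setExpectedLoss_succ, Fin.sum_univ_one, ih, ← Fin.sum_univ_one (expWeights η L),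
      sum_expWeights, one_mul, show t + (n + 1) = t + 1 + n by omega,
      sum_eq_sum_Ico_succ_bot (show t < t + 1 + n by omega)]

lemma div_add_mul_eq_sqrt {a S η : ℝ} (ha : 0 ≤ a) (hS : 0 < S) (hη : η = √(2 * a / S)) :
    a / η + η / 2 * S = √(2 * S * a) := by
  have hη_sq : η ^ 2 * S = 2 * a := by
    rw [hη, Real.sq_sqrt (by positivity)]
    field_simp
  have hsqrt : √(2 * S * a) = η * S := by
    rw [hη, ← Real.sqrt_sq hS.le, ← Real.sqrt_mul (by positivity), Real.sqrt_sq hS.le]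
    congr 1
    field_simp
  rw [hsqrt]
  rcases eq_or_ne η 0 with h0 | h0
  · simp [h0]
  · field_simp
    linarith

theorem exp3set_regret_general (N T : ℕ) (hT : 1 ≤ T)
    (ℓ : ℕ → Fin N → ℝ) (hℓ : ∀ t i, ℓ t i ∈ Set.Icc (0 : ℝ) 1)
    (Adj : ℕ → Fin N → Fin N → Bool)
    (hsym : ∀ t i j, Adj t i j = Adj t j i)
    (η : ℝ)
    (hη : η = Real.sqrt (2 * Real.log N /
      ∑ t ∈ Finset.range T, (independenceNumber N (Adj t) : ℝ))) :
    ∀ k : Fin N,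
      exp3setExpectedLoss N η ℓ Adj T 0 (fun _ => 0) -
          ∑ t ∈ Finset.range T, ℓ t k ≤
        Real.sqrt (2 * (∑ t ∈ Finset.range T, (independenceNumber N (Adj t) : ℝ)) *
          Real.log N) := by
  intro k
  set S := ∑ t ∈ range T, (independenceNumber N (Adj t) : ℝ)
  obtain rfl | hN := eq_or_lt_of_le (show 1 ≤ N from k.pos)
  · rw [exp3setExpectedLoss_fin_one, zero_add, ← range_eq_Ico, Fin.fin_one_eq_zero k, sub_self]
    exact Real.sqrt_nonneg _
  have hS : 0 < S := sum_pos (fun t _ => by exact_mod_cast one_le_independenceNumber (Adj t) k)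
    (nonempty_range_iff.2 (by omega))
  have hlog : 0 < Real.log N := Real.log_pos (by exact_mod_cast hN)
  have hη_pos : 0 < η := hη ▸ Real.sqrt_pos.2 (by positivity)
  have hbound := exp3setExpectedLoss_le hη_pos hℓ hsym k T 0 (fun _ => 0)
  rw [zero_add, ← range_eq_Ico, sum_add_distrib, ← mul_sum] at hbound
  have hpot : expPotential η (fun _ : Fin N => (0 : ℝ)) = Real.log N / η := by
    simp [expPotential]
  rw [← div_add_mul_eq_sqrt hlog.le hS hη]
  linarith

/-- **Regret of Exp3-SET (Alon et al.).**
Against an oblivious adversary choosing losses `ℓ_t ∈ [0,1]^N` and undirected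
observation graphs `G_t` (every node observing its own loss), Exp3-SET run with
learning rate `η = √(2 log N / Σ_t α_t)`, where `α_t` is the independence number
of `G_t`, guarantees expected regret at most `√(2 (Σ_t α_t) log N)` against
every fixed action `k`. -/
theorem exp3set_regret (N T : ℕ) (hN : 1 ≤ N) (hT : 1 ≤ T)
    (ℓ : ℕ → Fin N → ℝ) (hℓ : ∀ t i, ℓ t i ∈ Set.Icc (0 : ℝ) 1)
    (Adj : ℕ → Fin N → Fin N → Bool)
    (hsym : ∀ t i j, Adj t i j = Adj t j i)
    (η : ℝ)
    (hη : η = Real.sqrt (2 * Real.log N /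
      ∑ t ∈ Finset.range T, (independenceNumber N (Adj t) : ℝ))) :
    ∀ k : Fin N,
      exp3setExpectedLoss N η ℓ Adj T 0 (fun _ => 0) -
          ∑ t ∈ Finset.range T, ℓ t k ≤
        Real.sqrt (2 * (∑ t ∈ Finset.range T, (independenceNumber N (Adj t) : ℝ)) *
          Real.log N) :=
  exp3set_regret_general N T hT ℓ hℓ Adj hsym η hη
end

section
/- Optimality of the greedy algorithm on a polymatroid (Edmonds). Let M = (E, f) be a polymatroid on E = {1,…,L} and let w ∈ ℝ^L with w ≥ 0. Let e_1,…,e_L be an ordering of E with w(e_1) ≥ w(e_2) ≥ … ≥ w(e_L), and define x ∈ ℝ^L by x(e_i) = f({e_1,…,e_i}) − f({e_1,…,e_{i−1}}) for i = 1,…,L. Then x belongs to the base polyhedron B_M, and ⟨w, x⟩ = max_{y ∈ P_M} ⟨w, y⟩ = max_{y ∈ B_M} ⟨w, y⟩; in particular x is a maximum-weight basis of M. -/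
/-!
Order the ground set by nonincreasing weight and let `P n` be the set of the first `n` elements.
The greedy vector telescopes to `x(P n) = f(P n)`, so it is a base, and it is independent because
by submodularity the increment `f(P (i+1)) - f(P i)` is at most the increment of `f(· ∩ X)`.
For `y ∈ P_M` the slacks `D n = f(P n) - y(P n)` are nonnegative with `D 0 = 0`, and Abel summation
writes `⟨w, x - y⟩ = ∑ w(σ i) (D (i+1) - D i)` as a combination of the `D n` with the nonnegative
coefficients `w(σ i) - w(σ (i+1))`.
-/

/-- Membership in the independence polyhedron `P_M` of a polymatroid with
rank function `f` on the ground set `Fin L`. -/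
def memIndepPolyhedron {L : ℕ} (f : Finset (Fin L) → ℝ) (x : Fin L → ℝ) : Prop :=
  (∀ e, 0 ≤ x e) ∧ ∀ X : Finset (Fin L), ∑ e ∈ X, x e ≤ f X

/-- Membership in the base polyhedron `B_M` of a polymatroid with
rank function `f` on the ground set `Fin L`. -/
def memBasePolyhedron {L : ℕ} (f : Finset (Fin L) → ℝ) (x : Fin L → ℝ) : Prop :=
  memIndepPolyhedron f x ∧ ∑ e, x e = f Finset.univ

open Finset

lemma sum_range_mul_sub_nonneg_of_antitone {c D : ℕ → ℝ} (hc : Antitone c) (hc0 : ∀ k, 0 ≤ c k)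
    (hD : ∀ k, 0 ≤ D k) (hD0 : D 0 = 0) (n : ℕ) :
    0 ≤ ∑ k ∈ range n, c k * (D (k + 1) - D k) := by
  have key : ∀ n, c n * D n ≤ ∑ k ∈ range n, c k * (D (k + 1) - D k) := by
    intro n
    induction n with
    | zero => simp [hD0]
    | succ n ih =>
      rw [sum_range_succ]
      nlinarith [mul_le_mul_of_nonneg_right (hc n.le_succ) (hD (n + 1))]
  exact (mul_nonneg (hc0 n) (hD n)).trans (key n)

lemma sub_le_sub_insert_of_submodular {α : Type*} [DecidableEq α] {f : Finset α → ℝ}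
    (hsub : ∀ X Y, f (X ∪ Y) + f (X ∩ Y) ≤ f X + f Y) {A B : Finset α} {e : α}
    (hAB : A ⊆ B) (he : e ∉ B) :
    f (insert e B) - f B ≤ f (insert e A) - f A := by
  have hunion : insert e A ∪ B = insert e B := by
    rw [insert_union, union_eq_right.2 hAB]
  have hinter : insert e A ∩ B = A := by
    rw [insert_inter_of_notMem he, inter_eq_left.2 hAB]
  have := hsub (insert e A) B
  rw [hunion, hinter] at this
  linarith

lemma antitone_dite_lt {L : ℕ} {v : Fin L → ℝ} (hv : Antitone v) (hv0 : ∀ i, 0 ≤ v i) :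
    Antitone fun k : ℕ => if h : k < L then v ⟨k, h⟩ else 0 := by
  refine antitone_nat_of_succ_le fun k => ?_
  by_cases hk : k + 1 < L
  · rw [dif_pos hk, dif_pos (k.lt_succ_self.trans hk)]
    exact hv (Fin.mk_le_mk.2 k.le_succ)
  · rw [dif_neg hk]
    split_ifs
    exacts [hv0 _, le_rfl]

namespace Greedy

variable {α : Type*} {L : ℕ} (σ : Fin L ≃ α)

def prefixSet (n : ℕ) : Finset α := (univ.filter fun j : Fin L => (j : ℕ) < n).map σ.toEmbedding

variable {σ}

lemma apply_mem_prefixSet {i : Fin L} {n : ℕ} : σ i ∈ prefixSet σ n ↔ (i : ℕ) < n := by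
  simp [prefixSet]

@[simp]
lemma prefixSet_zero : prefixSet σ 0 = ∅ := by
  simp [prefixSet]

lemma apply_notMem_prefixSet (i : Fin L) : σ i ∉ prefixSet σ i := by
  simp [apply_mem_prefixSet]

lemma image_filter_eq_prefixSet [DecidableEq α] (p : Fin L → Prop) [DecidablePred p] {n : ℕ}
    (hp : ∀ j, p j ↔ (j : ℕ) < n) : (univ.filter p).image σ = prefixSet σ n := by
  rw [prefixSet, map_eq_image, filter_congr fun j _ => hp j]
  rfl

lemma prefixSet_succ [DecidableEq α] (i : Fin L) :
    prefixSet σ (i + 1) = insert (σ i) (prefixSet σ i) := by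
  ext e
  obtain ⟨j, rfl⟩ := σ.surjective e
  simp only [mem_insert, apply_mem_prefixSet, σ.injective.eq_iff, Fin.ext_iff]
  omega

lemma sum_prefixSet_succ_sub [DecidableEq α] (z : α → ℝ) (i : Fin L) :
    ∑ e ∈ prefixSet σ (i + 1), z e - ∑ e ∈ prefixSet σ i, z e = z (σ i) := by
  rw [prefixSet_succ, sum_insert (apply_notMem_prefixSet i), add_sub_cancel_right]

lemma prefixSet_of_le [Fintype α] {n : ℕ} (h : L ≤ n) : prefixSet σ n = univ := by
  refine eq_univ_of_forall fun e => ?_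
  obtain ⟨i, rfl⟩ := σ.surjective e
  exact apply_mem_prefixSet.2 (i.isLt.trans_le h)

lemma sum_sub_prefixSet [Fintype α] (g : Finset α → ℝ) :
    ∑ i : Fin L, (g (prefixSet σ (i + 1)) - g (prefixSet σ i)) = g univ - g ∅ := by
  rw [Fin.sum_univ_eq_sum_range (fun k => g (prefixSet σ (k + 1)) - g (prefixSet σ k)),
    sum_range_sub (fun k => g (prefixSet σ k)), prefixSet_of_le le_rfl, prefixSet_zero]

variable (σ) in
def greedyVector (f : Finset α → ℝ) (e : α) : ℝ :=
  f (prefixSet σ ((σ.symm e : ℕ) + 1)) - f (prefixSet σ (σ.symm e))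

variable {f : Finset α → ℝ}

lemma greedyVector_apply (i : Fin L) :
    greedyVector σ f (σ i) = f (prefixSet σ (i + 1)) - f (prefixSet σ i) := by
  simp [greedyVector]

lemma greedyVector_nonneg [DecidableEq α] (hf : Monotone f) (e : α) : 0 ≤ greedyVector σ f e := by
  obtain ⟨i, rfl⟩ := σ.surjective e
  rw [greedyVector_apply, prefixSet_succ, sub_nonneg]
  exact hf (subset_insert _ _)

lemma sum_greedyVector [Fintype α] : ∑ e, greedyVector σ f e = f univ - f ∅ := by
  simp_rw [← σ.sum_comp, greedyVector_apply]
  exact sum_sub_prefixSet f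

lemma indicator_greedyVector_le [DecidableEq α]
    (hsub : ∀ X Y, f (X ∪ Y) + f (X ∩ Y) ≤ f X + f Y) (X : Finset α) (i : Fin L) :
    (if σ i ∈ X then greedyVector σ f (σ i) else 0)
      ≤ f (prefixSet σ (i + 1) ∩ X) - f (prefixSet σ i ∩ X) := by
  rw [prefixSet_succ]
  split_ifs with hX
  · rw [greedyVector_apply, prefixSet_succ, insert_inter_of_mem hX]
    exact sub_le_sub_insert_of_submodular hsub inter_subset_left (apply_notMem_prefixSet i)
  · rw [insert_inter_of_notMem hX, sub_self]

lemma sum_greedyVector_le [Fintype α] [DecidableEq α]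
    (hsub : ∀ X Y, f (X ∪ Y) + f (X ∩ Y) ≤ f X + f Y) (X : Finset α) :
    ∑ e ∈ X, greedyVector σ f e ≤ f X - f ∅ :=
  calc ∑ e ∈ X, greedyVector σ f e
      = ∑ i, if σ i ∈ X then greedyVector σ f (σ i) else 0 := by
        rw [σ.sum_comp (fun e => if e ∈ X then greedyVector σ f e else 0), sum_ite_mem,
          univ_inter]
    _ ≤ ∑ i : Fin L, (f (prefixSet σ (i + 1) ∩ X) - f (prefixSet σ i ∩ X)) :=
        sum_le_sum fun i _ => indicator_greedyVector_le hsub X i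
    _ = f X - f ∅ := by
        rw [sum_sub_prefixSet (fun S => f (S ∩ X)), univ_inter, empty_inter]

lemma sum_mul_le_sum_mul_greedyVector [Fintype α] [DecidableEq α] (hf0 : f ∅ = 0)
    {w : α → ℝ} (hw : ∀ e, 0 ≤ w e) (hσ : Antitone (w ∘ σ))
    {y : α → ℝ} (hy : ∀ X, ∑ e ∈ X, y e ≤ f X) :
    ∑ e, w e * y e ≤ ∑ e, w e * greedyVector σ f e := by
  set c : ℕ → ℝ := fun k => if h : k < L then w (σ ⟨k, h⟩) else 0 with hc
  set D : ℕ → ℝ := fun n => f (prefixSet σ n) - ∑ e ∈ prefixSet σ n, y e with hD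
  have abel : ∑ e, w e * (greedyVector σ f e - y e) = ∑ k ∈ range L, c k * (D (k + 1) - D k) := by
    rw [← σ.sum_comp, ← Fin.sum_univ_eq_sum_range (fun k => c k * (D (k + 1) - D k))]
    refine sum_congr rfl fun i _ => ?_
    rw [hc, hD]
    simp only [dif_pos i.isLt, greedyVector_apply, ← sum_prefixSet_succ_sub y i]
    ring
  have hc0 : ∀ k, 0 ≤ c k := fun k => by
    simp only [hc]
    split_ifs
    exacts [hw _, le_rfl]
  have hD0 : D 0 = 0 := by simp only [hD, prefixSet_zero, sum_empty, hf0, sub_zero]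
  have hsum : 0 ≤ ∑ k ∈ range L, c k * (D (k + 1) - D k) :=
    sum_range_mul_sub_nonneg_of_antitone (antitone_dite_lt hσ fun i => hw (σ i)) hc0
      (fun n => sub_nonneg.2 (hy (prefixSet σ n))) hD0 L
  rw [← abel] at hsum
  simpa only [mul_sub, sum_sub_distrib, sub_nonneg] using hsum

end Greedy

theorem greedy_optimal_on_polymatroid_general (L : ℕ)
    (f : Finset (Fin L) → ℝ)
    (hf0 : f ∅ = 0)
    (hmono : ∀ X Y : Finset (Fin L), X ⊆ Y → f X ≤ f Y)
    (hsub : ∀ X Y : Finset (Fin L), f (X ∪ Y) + f (X ∩ Y) ≤ f X + f Y)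
    (w : Fin L → ℝ) (hw : ∀ e, 0 ≤ w e)
    (σ : Equiv.Perm (Fin L))
    (hσ : ∀ i j : Fin L, i ≤ j → w (σ j) ≤ w (σ i))
    (x : Fin L → ℝ)
    (hx : ∀ i : Fin L, x (σ i) =
      f ((Finset.univ.filter (fun j : Fin L => j ≤ i)).image σ)
        - f ((Finset.univ.filter (fun j : Fin L => j < i)).image σ)) :
    memBasePolyhedron f x ∧
      ∀ y : Fin L → ℝ, memIndepPolyhedron f y →
        ∑ e, w e * y e ≤ ∑ e, w e * x e := by
  have hx_eq : x = Greedy.greedyVector σ f := by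
    funext e
    obtain ⟨i, rfl⟩ := σ.surjective e
    rw [hx i, Greedy.greedyVector_apply,
      Greedy.image_filter_eq_prefixSet _ (n := i + 1) fun j => by rw [Fin.le_def]; omega,
      Greedy.image_filter_eq_prefixSet _ fun j => Fin.lt_def]
  subst hx_eq
  refine ⟨⟨⟨Greedy.greedyVector_nonneg hmono, fun X => ?_⟩, ?_⟩, fun y hy => ?_⟩
  · simpa [hf0] using Greedy.sum_greedyVector_le hsub X
  · simpa [hf0] using Greedy.sum_greedyVector (σ := σ) (f := f)
  · exact Greedy.sum_mul_le_sum_mul_greedyVector hf0 hw hσ hy.2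

/-- **Optimality of the greedy algorithm on a polymatroid (Edmonds).**
If `w ≥ 0` and the items are ordered by nonincreasing weight via the permutation `σ`,
then the greedy vector `x`, with `x (σ i) = f({σ 0, …, σ i}) − f({σ 0, …, σ (i−1)})`,
belongs to the base polyhedron and maximizes `⟨w, ·⟩` over the whole independence
polyhedron (hence also over the base polyhedron). -/
theorem greedy_optimal_on_polymatroid (L : ℕ)
    (f : Finset (Fin L) → ℝ)
    (hf0 : f ∅ = 0)
    (hfnn : ∀ X, 0 ≤ f X)
    (hmono : ∀ X Y : Finset (Fin L), X ⊆ Y → f X ≤ f Y)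
    (hsub : ∀ X Y : Finset (Fin L), f (X ∪ Y) + f (X ∩ Y) ≤ f X + f Y)
    (w : Fin L → ℝ) (hw : ∀ e, 0 ≤ w e)
    (σ : Equiv.Perm (Fin L))
    (hσ : ∀ i j : Fin L, i ≤ j → w (σ j) ≤ w (σ i))
    (x : Fin L → ℝ)
    (hx : ∀ i : Fin L, x (σ i) =
      f ((Finset.univ.filter (fun j : Fin L => j ≤ i)).image σ)
        - f ((Finset.univ.filter (fun j : Fin L => j < i)).image σ)) :
    memBasePolyhedron f x ∧
      ∀ y : Fin L → ℝ, memIndepPolyhedron f y →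
        ∑ e, w e * y e ≤ ∑ e, w e * x e :=
  greedy_optimal_on_polymatroid_general L f hf0 hmono hsub w hw σ hσ x hx
end

section
/- Dual representation of ridge regression. Let Φ be a real n × d matrix, y ∈ ℝ^n, and γ > 0. Then the regularized least-squares loss 𝓛(θ) = γ·‖θ‖² + ‖y − Φθ‖² has a unique minimizer over ℝ^d, given by θ = Φᵀ·(ΦΦᵀ + γI_n)^{-1}·y; consequently, for every v ∈ ℝ^d the prediction ⟨v, θ⟩ equals (Φv)ᵀ·(ΦΦᵀ + γI_n)^{-1}·y, i.e., it can be computed purely from inner products (kernel evaluations) k = Φv and K = ΦΦᵀ as kᵀ(K + γI)^{-1}y. -/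
/-!
Since `γ > 0`, the matrix `A = ΦΦᵀ + γI` is positive definite, and `w = A⁻¹y` satisfies
`y - ΦΦᵀw = γw`. Hence `θ₀ = Φᵀw` solves the normal equation `Φᵀ(y - Φθ₀) = γθ₀`, which makes
the cross terms in the expansion of the loss around `θ₀` cancel:
`𝓛(θ₀ + e) = 𝓛(θ₀) + γ‖e‖² + ‖Φe‖²`. So `θ₀` is the unique minimizer, and
`⟨v, Φᵀw⟩ = ⟨Φv, w⟩` gives the kernel form of the predictions.
-/

open Matrix

namespace RidgeRegression

variable {m k : Type*} [Fintype m] [Fintype k]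

theorem posDef_mul_transpose_add_smul_one [DecidableEq m] (Φ : Matrix m k ℝ) {γ : ℝ}
    (hγ : 0 < γ) : (Φ * Φᵀ + γ • (1 : Matrix m m ℝ)).PosDef := by
  have hΦ : (Φ * Φᵀ).PosSemidef := by
    simpa only [conjTranspose_eq_transpose_of_trivial] using posSemidef_self_mul_conjTranspose Φ
  exact PosDef.posSemidef_add hΦ (PosDef.one.smul hγ)

theorem sub_mulVec_transpose_mulVec_inv [DecidableEq m] (Φ : Matrix m k ℝ) (y : m → ℝ)
    {γ : ℝ} (hγ : 0 < γ) :
    y - Φ *ᵥ (Φᵀ *ᵥ ((Φ * Φᵀ + γ • 1)⁻¹ *ᵥ y)) = γ • ((Φ * Φᵀ + γ • 1)⁻¹ *ᵥ y) := by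
  have hA : IsUnit (Φ * Φᵀ + γ • (1 : Matrix m m ℝ)).det :=
    (isUnit_iff_isUnit_det _).mp (posDef_mul_transpose_add_smul_one Φ hγ).isUnit
  have hAw := mulVec_mulVec y (Φ * Φᵀ + γ • 1) (Φ * Φᵀ + γ • 1)⁻¹
  rw [mul_nonsing_inv _ hA, one_mulVec, add_mulVec, smul_mulVec, one_mulVec,
    ← mulVec_mulVec] at hAw
  rw [sub_eq_iff_eq_add', hAw]

noncomputable def ridgeLoss (Φ : Matrix m k ℝ) (y : m → ℝ) (γ : ℝ) (θ : k → ℝ) : ℝ :=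
  γ * (θ ⬝ᵥ θ) + (y - Φ *ᵥ θ) ⬝ᵥ (y - Φ *ᵥ θ)

variable {Φ : Matrix m k ℝ} {y : m → ℝ} {γ : ℝ} {θ₀ : k → ℝ}

theorem ridgeLoss_add_of_normal_eq (hθ₀ : Φᵀ *ᵥ (y - Φ *ᵥ θ₀) = γ • θ₀) (e : k → ℝ) :
    ridgeLoss Φ y γ (θ₀ + e) = ridgeLoss Φ y γ θ₀ + γ * (e ⬝ᵥ e) + Φ *ᵥ e ⬝ᵥ Φ *ᵥ e := by
  have hcross : Φ *ᵥ e ⬝ᵥ (y - Φ *ᵥ θ₀) = γ * (e ⬝ᵥ θ₀) := by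
    rw [← vecMul_transpose, ← dotProduct_mulVec, hθ₀, dotProduct_smul, smul_eq_mul]
  have hsplit : y - Φ *ᵥ (θ₀ + e) = (y - Φ *ᵥ θ₀) - Φ *ᵥ e := by
    rw [mulVec_add, sub_add_eq_sub_sub]
  rw [ridgeLoss, ridgeLoss, hsplit]
  generalize y - Φ *ᵥ θ₀ = r at hcross ⊢
  simp only [add_dotProduct, dotProduct_add, sub_dotProduct, dotProduct_sub,
    dotProduct_comm e θ₀, dotProduct_comm r (Φ *ᵥ e), hcross]
  ring

theorem ridgeLoss_le_of_normal_eq (hθ₀ : Φᵀ *ᵥ (y - Φ *ᵥ θ₀) = γ • θ₀) (hγ : 0 ≤ γ)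
    (θ : k → ℝ) : ridgeLoss Φ y γ θ₀ ≤ ridgeLoss Φ y γ θ := by
  rw [← add_sub_cancel θ₀ θ, ridgeLoss_add_of_normal_eq hθ₀]
  have he := dotProduct_self_star_nonneg (θ - θ₀)
  have hΦe := dotProduct_self_star_nonneg (Φ *ᵥ (θ - θ₀))
  simp only [star_trivial] at he hΦe
  nlinarith

theorem eq_of_ridgeLoss_le_of_normal_eq (hθ₀ : Φᵀ *ᵥ (y - Φ *ᵥ θ₀) = γ • θ₀) (hγ : 0 < γ)
    {θ : k → ℝ} (hθ : ridgeLoss Φ y γ θ ≤ ridgeLoss Φ y γ θ₀) : θ = θ₀ := by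
  rw [← add_sub_cancel θ₀ θ, ridgeLoss_add_of_normal_eq hθ₀] at hθ
  have hΦe := dotProduct_self_star_nonneg (Φ *ᵥ (θ - θ₀))
  have he := dotProduct_self_star_nonneg (θ - θ₀)
  simp only [star_trivial] at hΦe he
  have he0 : (θ - θ₀) ⬝ᵥ (θ - θ₀) = 0 := by nlinarith
  exact sub_eq_zero.mp (dotProduct_self_eq_zero.mp he0)

end RidgeRegression

open RidgeRegression in
/-- **Dual representation of ridge regression.**  For a real `n × d` matrix `Φ`,
`y ∈ ℝ^n` and `γ > 0`, the regularized least-squares loss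
`𝓛(θ) = γ‖θ‖² + ‖y − Φθ‖²` has a unique minimizer over `ℝ^d`, given by
`θ = Φᵀ(ΦΦᵀ + γI_n)⁻¹ y`; consequently every prediction `⟨v, θ⟩` equals
`(Φv)ᵀ(ΦΦᵀ + γI_n)⁻¹ y`, i.e., it can be computed purely from inner products. -/
theorem ridge_regression_dual (n d : ℕ) (Φ : Matrix (Fin n) (Fin d) ℝ)
    (y : Fin n → ℝ) (γ : ℝ) (hγ : 0 < γ) :
    let Lss : (Fin d → ℝ) → ℝ := fun θ =>
      γ * (θ ⬝ᵥ θ) + (y - Φ.mulVec θ) ⬝ᵥ (y - Φ.mulVec θ)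
    let θ₀ : Fin d → ℝ :=
      Φᵀ.mulVec (((Φ * Φᵀ + γ • (1 : Matrix (Fin n) (Fin n) ℝ))⁻¹).mulVec y)
    (∀ θ : Fin d → ℝ, Lss θ₀ ≤ Lss θ) ∧
    (∀ θ : Fin d → ℝ, (∀ θ' : Fin d → ℝ, Lss θ ≤ Lss θ') → θ = θ₀) ∧
    (∀ v : Fin d → ℝ, v ⬝ᵥ θ₀ =
      (Φ.mulVec v) ⬝ᵥ ((Φ * Φᵀ + γ • (1 : Matrix (Fin n) (Fin n) ℝ))⁻¹).mulVec y) := by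
  intro Lss θ₀
  have hnormal : Φᵀ *ᵥ (y - Φ *ᵥ θ₀) = γ • θ₀ := by
    rw [sub_mulVec_transpose_mulVec_inv Φ y hγ, mulVec_smul]
  refine ⟨ridgeLoss_le_of_normal_eq hnormal hγ.le,
    fun θ hθ => eq_of_ridgeLoss_le_of_normal_eq hnormal hγ (hθ θ₀), fun v => ?_⟩
  rw [dotProduct_mulVec, vecMul_transpose]
end

section
/- Effective dimension lower-bounds the information gain. Let (λ_i)_{i≥1} be a nonincreasing summable sequence of nonnegative reals, let σ > 0, and let d ≥ 2 be an integer with λ_{d−1} > 0. Then Σ_{i≥1} log(1 + λ_i/σ²) ≥ log(1 + λ_{d−1}/σ²) · ( (d−1) + ( Σ_{i≥d} λ_i ) / λ_{d−1} ). -/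
/-!
Split the series after its first `n + 1 = d - 1` terms. Each head term is at least
`log (1 + μ n / s)` by monotonicity. Each tail term has `μ i ≤ μ n`, and concavity of
`x ↦ log (1 + x)` in the form of Bernoulli's inequality `(1 + x) ^ t ≤ 1 + t * x` for
`t ∈ [0, 1]` gives `(μ i / μ n) * log (1 + μ n / s) ≤ log (1 + μ i / s)`.
-/

open Real

theorem mul_log_one_add_le_log_one_add_mul {x t : ℝ} (hx : -1 < x) (ht₀ : 0 ≤ t) (ht₁ : t ≤ 1) :
    t * log (1 + x) ≤ log (1 + t * x) := by
  have hpos : 0 < 1 + x := by linarith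
  rw [← log_rpow hpos]
  exact log_le_log (rpow_pos_of_pos hpos t) (rpow_one_add_le_one_add_mul_self hx.le ht₀ ht₁)

theorem log_one_add_div_nonneg {a s : ℝ} (ha : 0 ≤ a) (hs : 0 ≤ s) : 0 ≤ log (1 + a / s) :=
  log_nonneg (by linarith [div_nonneg ha hs])

theorem div_mul_log_one_add_div_le {a b s : ℝ} (ha : 0 ≤ a) (hab : a ≤ b) (hs : 0 ≤ s) :
    a / b * log (1 + b / s) ≤ log (1 + a / s) := by
  rcases hab.lt_or_eq with hab | rfl
  · have hb : 0 < b := ha.trans_lt hab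
    calc a / b * log (1 + b / s) ≤ log (1 + a / b * (b / s)) :=
          mul_log_one_add_le_log_one_add_mul (by linarith [div_nonneg hb.le hs])
            (div_nonneg ha hb.le) ((div_le_one hb).2 hab.le)
      _ = log (1 + a / s) := by rw [div_mul_div_cancel₀ hb.ne']
  · exact mul_le_of_le_one_left (log_one_add_div_nonneg ha hs) (div_self_le_one a)

section

variable {μ : ℕ → ℝ} {s : ℝ}

theorem succ_mul_log_one_add_div_le_sum_range (hμ : Antitone μ) (hμ₀ : ∀ i, 0 ≤ μ i) (hs : 0 ≤ s)
    (n : ℕ) :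
    (n + 1) * log (1 + μ n / s) ≤ ∑ i ∈ Finset.range (n + 1), log (1 + μ i / s) := by
  have h := Finset.card_nsmul_le_sum (Finset.range (n + 1)) (fun i => log (1 + μ i / s))
    (log (1 + μ n / s)) fun i hi => by
      have hin : i ≤ n := Nat.lt_succ_iff.1 (Finset.mem_range.1 hi)
      exact log_le_log (by linarith [div_nonneg (hμ₀ n) hs]) (by gcongr; exact hμ hin)
  simpa using h

theorem log_one_add_div_mul_tsum_div_le_tsum (hμ : Antitone μ) (hμ₀ : ∀ i, 0 ≤ μ i)
    (hsum : Summable μ) (hs : 0 ≤ s) (n : ℕ) :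
    log (1 + μ n / s) * ((∑' i, μ (i + (n + 1))) / μ n) ≤
      ∑' i, log (1 + μ (i + (n + 1)) / s) := by
  have htail : Summable fun i => μ (i + (n + 1)) := (summable_nat_add_iff (n + 1)).2 hsum
  calc log (1 + μ n / s) * ((∑' i, μ (i + (n + 1))) / μ n)
      = ∑' i, μ (i + (n + 1)) / μ n * log (1 + μ n / s) := by
        rw [tsum_mul_right, tsum_div_const, mul_comm]
    _ ≤ ∑' i, log (1 + μ (i + (n + 1)) / s) :=
        (htail.div_const _).mul_right _ |>.tsum_le_tsum
          (fun i => div_mul_log_one_add_div_le (hμ₀ _) (hμ (by omega)) hs)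
          (summable_log_one_add_of_summable (htail.div_const s))

theorem log_one_add_div_mul_effective_dimension_le_tsum (hμ : Antitone μ) (hμ₀ : ∀ i, 0 ≤ μ i)
    (hsum : Summable μ) (hs : 0 ≤ s) (n : ℕ) :
    log (1 + μ n / s) * ((n + 1) + (∑' i, μ (i + (n + 1))) / μ n) ≤
      ∑' i, log (1 + μ i / s) := by
  rw [← (summable_log_one_add_of_summable (hsum.div_const s)).sum_add_tsum_nat_add (n + 1),
    mul_add, mul_comm]
  exact add_le_add (succ_mul_log_one_add_div_le_sum_range hμ hμ₀ hs n)
    (log_one_add_div_mul_tsum_div_le_tsum hμ hμ₀ hsum hs n)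

end

theorem effective_dimension_le_information_gain_general
    (lam : ℕ → ℝ) (σ : ℝ)
    (hnn : ∀ i, 1 ≤ i → 0 ≤ lam i)
    (hmono : ∀ i j, 1 ≤ i → i ≤ j → lam j ≤ lam i)
    (hsum : Summable fun i : ℕ => lam (i + 1))
    (d : ℕ) (hd : 2 ≤ d) :
    Real.log (1 + lam (d - 1) / σ ^ 2) *
        (((d : ℝ) - 1) + (∑' i : ℕ, lam (i + d)) / lam (d - 1)) ≤
      ∑' i : ℕ, Real.log (1 + lam (i + 1) / σ ^ 2) := by
  obtain ⟨n, rfl⟩ : ∃ n, d = n + 2 := ⟨d - 2, by omega⟩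
  have h := log_one_add_div_mul_effective_dimension_le_tsum (μ := fun i => lam (i + 1))
    (fun i j hij => hmono _ _ (by omega) (by omega)) (fun i => hnn _ (by omega)) hsum
    (sq_nonneg σ) n
  rw [show n + 2 - 1 = n + 1 by omega]
  convert h using 4
  · push_cast; ring
  · rfl

/-- **Effective dimension lower-bounds the information gain.**
Let `(λ_i)_{i ≥ 1}` be a nonincreasing summable sequence of nonnegative reals,
`σ > 0`, and `d ≥ 2` an integer with `λ_{d−1} > 0`.  Then
`Σ_{i ≥ 1} log(1 + λ_i/σ²) ≥ log(1 + λ_{d−1}/σ²) · ((d−1) + (Σ_{i ≥ d} λ_i)/λ_{d−1})`.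
(The sequence is indexed so that `lam i` is `λ_i` for `i ≥ 1`.) -/
theorem effective_dimension_le_information_gain
    (lam : ℕ → ℝ) (σ : ℝ) (hσ : 0 < σ)
    (hnn : ∀ i, 1 ≤ i → 0 ≤ lam i)
    (hmono : ∀ i j, 1 ≤ i → i ≤ j → lam j ≤ lam i)
    (hsum : Summable fun i : ℕ => lam (i + 1))
    (d : ℕ) (hd : 2 ≤ d) (hpos : 0 < lam (d - 1)) :
    Real.log (1 + lam (d - 1) / σ ^ 2) *
        (((d : ℝ) - 1) + (∑' i : ℕ, lam (i + d)) / lam (d - 1)) ≤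
      ∑' i : ℕ, Real.log (1 + lam (i + 1) / σ ^ 2) :=
  effective_dimension_le_information_gain_general lam σ hnn hmono hsum d hd
end

section
/- Optimism of the geometric-resampling loss estimates of FPL-IX. Let o ∈ (0,1], γ ∈ (0,1], and ℓ ≥ 0. Let X be geometric with parameter o, U geometric with parameter γ, and O a Bernoulli random variable with success probability o, with X, U, O mutually independent. Set K = min(X, U) and define the loss estimate ℓ̂ = K·O·ℓ. Then E[K] = 1/( o + (1−o)·γ ) and E[ℓ̂] = ℓ·o/( o + (1−o)·γ ) ≤ ℓ; that is, the estimate is optimistic: it lower-bounds the true loss in expectation. -/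
/-! The mean of `K = min(X, U)` is a tail sum: `E[K] = ∑ₙ P(K > n)`, and by independence
`P(K > n) = P(X > n) P(U > n) = ((1 - o)(1 - γ))ⁿ`, so `E[K] = 1 / (1 - (1 - o)(1 - γ))
= 1 / (o + (1 - o)γ)`. Since `K` is a function of `(X, U)`, it is independent of `O`, whence
`E[K O ℓ] = E[K] · o · ℓ`, and `o ≤ o + (1 - o)γ` gives the bound. -/

open MeasureTheory ProbabilityTheory Set
open scoped ENNReal

theorem tsum_ite_lt_eq_natCast (k : ℕ) :
    ∑' n : ℕ, (if n < k then (1 : ℝ≥0∞) else 0) = k := by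
  rw [tsum_eq_sum (s := Finset.range k) fun n hn => if_neg (by simpa using hn)]
  simp [Finset.sum_ite_of_true fun n hn => Finset.mem_range.1 hn]

section

variable {Ω : Type*} [MeasurableSpace Ω] {μ : Measure Ω}

theorem lintegral_natCast_eq_tsum_measure_lt {K : Ω → ℕ} (hK : Measurable K) :
    ∫⁻ ω, (K ω : ℝ≥0∞) ∂μ = ∑' n : ℕ, μ {ω | n < K ω} := by
  have hmeas (n : ℕ) : MeasurableSet {ω | n < K ω} := measurableSet_lt measurable_const hK
  calc ∫⁻ ω, (K ω : ℝ≥0∞) ∂μ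
      = ∫⁻ ω, ∑' n : ℕ, {ω | n < K ω}.indicator 1 ω ∂μ := by
        simp only [indicator_apply, mem_ofPred_eq, Pi.one_apply, tsum_ite_lt_eq_natCast]
    _ = ∑' n : ℕ, μ {ω | n < K ω} := by
        rw [lintegral_tsum fun n => (measurable_one.indicator (hmeas n)).aemeasurable]
        simp only [lintegral_indicator_one (hmeas _)]

theorem integral_natCast_eq_inv_of_measure_lt_eq_pow {K : Ω → ℕ} (hK : Measurable K)
    {r : ℝ} (hr0 : 0 ≤ r) (hr1 : r < 1)
    (htail : ∀ n : ℕ, μ {ω | n < K ω} = ENNReal.ofReal (r ^ n)) :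
    ∫ ω, (K ω : ℝ) ∂μ = (1 - r)⁻¹ := by
  rw [integral_eq_lintegral_of_nonneg_ae (ae_of_all _ fun ω => Nat.cast_nonneg _)
    (measurable_from_nat.comp hK).aestronglyMeasurable]
  simp only [ENNReal.ofReal_natCast]
  rw [lintegral_natCast_eq_tsum_measure_lt hK]
  simp only [htail, ENNReal.ofReal_pow hr0]
  rw [ENNReal.tsum_geometric, ← ENNReal.ofReal_one, ← ENNReal.ofReal_sub _ hr0,
    ENNReal.toReal_inv, ENNReal.toReal_ofReal (by linarith)]

theorem measure_lt_eq_pow_of_geometric {q : ℝ} (hq : q ∈ Ioc (0 : ℝ) 1) {Y : Ω → ℕ}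
    (hY : Measurable Y)
    (hlaw : ∀ k : ℕ, 1 ≤ k → μ {ω | Y ω = k} = ENNReal.ofReal ((1 - q) ^ (k - 1) * q))
    (n : ℕ) : μ {ω | n < Y ω} = ENNReal.ofReal ((1 - q) ^ n) := by
  obtain ⟨hq0, hq1⟩ := hq
  have hunion : {ω | n < Y ω} = ⋃ j : ℕ, {ω | Y ω = n + 1 + j} := by
    ext ω
    simp only [mem_ofPred_eq, mem_iUnion]
    exact ⟨fun h => ⟨Y ω - (n + 1), by omega⟩, fun ⟨j, hj⟩ => by omega⟩
  have hdisj : Pairwise (Function.onFun Disjoint fun j : ℕ => {ω | Y ω = n + 1 + j}) :=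
    fun i j hij => Disjoint.preimage Y (disjoint_singleton.2 (by omega))
  have hterm (j : ℕ) :
      μ {ω | Y ω = n + 1 + j} = ENNReal.ofReal ((1 - q) ^ n * q * (1 - q) ^ j) := by
    rw [hlaw _ (by omega), show n + 1 + j - 1 = n + j by omega, pow_add]
    ring_nf
  have hsummable : Summable fun j : ℕ => (1 - q) ^ n * q * (1 - q) ^ j :=
    (summable_geometric_of_lt_one (by linarith) (by linarith)).mul_left _
  rw [hunion, measure_iUnion hdisj fun j => hY (measurableSet_singleton _)]
  simp only [hterm]
  rw [← ENNReal.ofReal_tsum_of_nonneg (fun j => by positivity) hsummable, tsum_mul_left,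
    tsum_geometric_of_lt_one (by linarith) (by linarith), sub_sub_cancel]
  field_simp

theorem measure_lt_min_eq_mul {β : Type*} [LinearOrder β] [TopologicalSpace β]
    [OrderClosedTopology β] [MeasurableSpace β] [OpensMeasurableSpace β] {X U : Ω → β}
    (hXU : IndepFun X U μ) (b : β) :
    μ {ω | b < min (X ω) (U ω)} = μ {ω | b < X ω} * μ {ω | b < U ω} := by
  have hset : {ω | b < min (X ω) (U ω)} = X ⁻¹' Ioi b ∩ U ⁻¹' Ioi b := by
    ext ω; simp
  rw [hset, hXU.measure_inter_preimage_eq_mul _ _ measurableSet_Ioi measurableSet_Ioi]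
  rfl

theorem integral_natCast_eq_of_bernoulli [IsProbabilityMeasure μ] {o : ℝ}
    (ho : o ∈ Icc (0 : ℝ) 1) {O : Ω → ℕ} (hO : Measurable O)
    (hO1 : μ {ω | O ω = 1} = ENNReal.ofReal o)
    (hO0 : μ {ω | O ω = 0} = ENNReal.ofReal (1 - o)) :
    ∫ ω, (O ω : ℝ) ∂μ = o := by
  obtain ⟨ho0, ho1⟩ := ho
  have hmeas (k : ℕ) : MeasurableSet {ω | O ω = k} := hO (measurableSet_singleton k)
  have hdisj : Disjoint {ω | O ω = 0} {ω | O ω = 1} :=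
    Disjoint.preimage O (disjoint_singleton.2 zero_ne_one)
  have hzero_or_one : ∀ᵐ ω ∂μ, O ω = 0 ∨ O ω = 1 := by
    rw [ae_iff_measure_eq (p := fun ω => O ω = 0 ∨ O ω = 1)
      ((hmeas 0).union (hmeas 1)).nullMeasurableSet, measure_univ, ofPred_or,
      measure_union hdisj (hmeas 1), hO0, hO1,
      ← ENNReal.ofReal_add (by linarith) ho0, sub_add_cancel, ENNReal.ofReal_one]
  have hindicator : (fun ω => (O ω : ℝ)) =ᵐ[μ] {ω | O ω = 1}.indicator 1 := by
    filter_upwards [hzero_or_one] with ω hω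
    rcases hω with h | h <;> simp [h]
  rw [integral_congr_ae hindicator, integral_indicator_one (hmeas 1), measureReal_def, hO1,
    ENNReal.toReal_ofReal ho0]

end

/-- **Optimism of the geometric-resampling loss estimates of FPL-IX.**
Let `X` be geometric with parameter `o ∈ (0,1]`, `U` geometric with parameter
`γ ∈ (0,1]`, and `O` Bernoulli with success probability `o`, mutually
independent, and let `ℓ ≥ 0`.  With `K = min(X, U)` and the loss estimate
`ℓ̂ = K·O·ℓ`, one has `E[K] = 1/(o + (1−o)γ)` and
`E[ℓ̂] = ℓ·o/(o + (1−o)γ) ≤ ℓ`: the estimate lower-bounds the true loss in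
expectation. -/
theorem fplix_estimates_optimistic
    (Ω : Type) [MeasurableSpace Ω] (P : Measure Ω) [IsProbabilityMeasure P]
    (o γ ℓ : ℝ) (ho : o ∈ Set.Ioc (0 : ℝ) 1) (hγ : γ ∈ Set.Ioc (0 : ℝ) 1) (hℓ : 0 ≤ ℓ)
    (X U O : Ω → ℕ) (hX : Measurable X) (hU : Measurable U) (hO : Measurable O)
    (hindep : iIndepFun ![X, U, O] P)
    (hXlaw : ∀ k : ℕ, 1 ≤ k → P {ω | X ω = k} = ENNReal.ofReal ((1 - o) ^ (k - 1) * o))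
    (hUlaw : ∀ k : ℕ, 1 ≤ k → P {ω | U ω = k} = ENNReal.ofReal ((1 - γ) ^ (k - 1) * γ))
    (hO1 : P {ω | O ω = 1} = ENNReal.ofReal o)
    (hO0 : P {ω | O ω = 0} = ENNReal.ofReal (1 - o)) :
    (∫ ω, (min (X ω) (U ω) : ℝ) ∂P = 1 / (o + (1 - o) * γ)) ∧
    (∫ ω, (min (X ω) (U ω) : ℝ) * (O ω : ℝ) * ℓ ∂P = ℓ * o / (o + (1 - o) * γ)) ∧
    ℓ * o / (o + (1 - o) * γ) ≤ ℓ := by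
  obtain ⟨ho0, ho1⟩ := ho
  obtain ⟨hγ0, hγ1⟩ := hγ
  have hden : 0 < o + (1 - o) * γ := by nlinarith
  have hXU : IndepFun X U P := hindep.indepFun (i := 0) (j := 1) (by decide)
  have hKO : IndepFun (fun ω => (min (X ω) (U ω) : ℝ)) (fun ω => (O ω : ℝ)) P := by
    have h := hindep.indepFun_prodMk (fun i => by fin_cases i <;> assumption) 0 1 2
      (by decide) (by decide)
    exact h.comp (measurable_from_nat.comp measurable_fst |>.min
      (measurable_from_nat.comp measurable_snd)) measurable_from_nat
  have hmeanK : ∫ ω, (min (X ω) (U ω) : ℝ) ∂P = 1 / (o + (1 - o) * γ) := by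
    simp only [← Nat.cast_min]
    rw [one_div, show o + (1 - o) * γ = 1 - (1 - o) * (1 - γ) by ring]
    refine integral_natCast_eq_inv_of_measure_lt_eq_pow (hX.min hU) (by nlinarith) (by nlinarith)
      fun n => ?_
    rw [measure_lt_min_eq_mul hXU, measure_lt_eq_pow_of_geometric ⟨ho0, ho1⟩ hX hXlaw,
      measure_lt_eq_pow_of_geometric ⟨hγ0, hγ1⟩ hU hUlaw,
      ← ENNReal.ofReal_mul (pow_nonneg (by linarith) n), mul_pow]
  have hmeanO := integral_natCast_eq_of_bernoulli ⟨ho0.le, ho1⟩ hO hO1 hO0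
  refine ⟨hmeanK, ?_, ?_⟩
  · rw [integral_mul_const, hKO.integral_fun_mul_eq_mul_integral
      ((measurable_from_nat.comp hX).min (measurable_from_nat.comp hU)).aestronglyMeasurable
      (measurable_from_nat.comp hO).aestronglyMeasurable, hmeanK, hmeanO]
    ring
  · rw [mul_div_assoc]
    exact mul_le_of_le_one_right hℓ ((div_le_one hden).2 (by nlinarith))
end

section
/- Optimism of the Exp3-WIX loss estimates. Fix N ≥ 1, a matrix of observation weights s ∈ [0,1]^{N×N}, a node index i, a loss ℓ_i ≥ 0, a probability vector p over [N], and γ > 0. Let I be a random node drawn according to p and let ξ_i be a random variable independent of I with E[ξ_i] = 0. The learner receives the noisy observation c_i = s_{I,i}·ℓ_i + (1 − s_{I,i})·ξ_i and forms the estimate ℓ̂_i = s_{I,i}·c_i / ( Σ_{j=1}^N p_j·s_{j,i}² + γ ). Then E[ℓ̂_i] = ( Σ_{j=1}^N p_j·s_{j,i}² )·ℓ_i / ( Σ_{j=1}^N p_j·s_{j,i}² + γ ) ≤ ℓ_i; that is, the estimate is optimistic: it lower-bounds the true loss in expectation. -/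
/-!
Write `A = ∑ j, p j * s j i ^ 2`. The estimate is `(s_I² ℓ + s_I (1 - s_I) ξ) / (A + γ)`. The first
term is a function of `I` alone, with expectation `A ℓ` under the law `p`; the second is a function
of `I` times `ξ`, so by independence its expectation factors through `E[ξ] = 0`. Optimism is then
`A ℓ / (A + γ) ≤ ℓ`, as `A ≥ 0`, `γ > 0` and `ℓ ≥ 0`.
-/

open MeasureTheory ProbabilityTheory

theorem ProbabilityTheory.IndepFun.comp_left_of_finite {Ω α : Type*} [MeasurableSpace Ω]
    [MeasurableSpace α] [MeasurableSingletonClass α] [Finite α] {P : Measure Ω} {I : Ω → α}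
    {ξ : Ω → ℝ} (hindep : IndepFun I ξ P) (g : α → ℝ) : IndepFun (fun ω => g (I ω)) ξ P :=
  hindep.comp (measurable_of_finite g) measurable_id

section FiniteValued

variable {Ω α : Type*} [MeasurableSpace Ω] [MeasurableSpace α] [MeasurableSingletonClass α]
  {P : Measure Ω} [IsFiniteMeasure P] {I : Ω → α}

theorem integrable_comp_of_finite [Finite α] (hI : Measurable I) (h : α → ℝ) :
    Integrable (fun ω => h (I ω)) P :=
  Integrable.of_finite.comp_measurable hI

theorem integral_comp_eq_sum_of_law [Fintype α] (hI : Measurable I) {p : α → ℝ}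
    (hp : ∀ j, 0 ≤ p j) (hlaw : ∀ j, P {ω | I ω = j} = ENNReal.ofReal (p j)) (h : α → ℝ) :
    ∫ ω, h (I ω) ∂P = ∑ j, p j * h j := by
  rw [← integral_map hI.aemeasurable (measurable_of_finite h).aestronglyMeasurable,
    integral_fintype .of_finite]
  refine Finset.sum_congr rfl fun j _ => ?_
  rw [measureReal_def, Measure.map_apply hI (measurableSet_singleton j),
    ← Set.ofPred_eq_eq_singleton, Set.preimage_ofPred_eq, hlaw j,
    ENNReal.toReal_ofReal (hp j), smul_eq_mul]

theorem integrable_comp_mul_of_indepFun [Finite α] (hI : Measurable I) {ξ : Ω → ℝ}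
    (hξ : Integrable ξ P) (hindep : IndepFun I ξ P) (g : α → ℝ) :
    Integrable (fun ω => g (I ω) * ξ ω) P :=
  (hindep.comp_left_of_finite g).integrable_mul (integrable_comp_of_finite hI g) hξ

theorem integral_comp_mul_eq_zero_of_indepFun [Finite α] (hI : Measurable I) {ξ : Ω → ℝ}
    (hξ : Integrable ξ P) (hξ0 : ∫ ω, ξ ω ∂P = 0) (hindep : IndepFun I ξ P) (g : α → ℝ) :
    ∫ ω, g (I ω) * ξ ω ∂P = 0 := by
  rw [(hindep.comp_left_of_finite g).integral_fun_mul_eq_mul_integral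
    (integrable_comp_of_finite hI g).aestronglyMeasurable hξ.aestronglyMeasurable, hξ0, mul_zero]

end FiniteValued

theorem mul_div_add_le {a b c : ℝ} (ha : 0 ≤ a) (hb : 0 ≤ b) (hc : 0 < c) :
    a * b / (a + c) ≤ b := by
  rw [div_le_iff₀ (by positivity)]
  nlinarith

theorem wix_estimates_optimistic_general
    (N : ℕ)
    (s : Fin N → Fin N → ℝ)
    (i : Fin N) (ℓi : ℝ) (hℓ : 0 ≤ ℓi)
    (p : Fin N → ℝ) (hp : ∀ j, 0 ≤ p j)
    (γ : ℝ) (hγ : 0 < γ)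
    (Ω : Type) [MeasurableSpace Ω] (P : Measure Ω) [IsProbabilityMeasure P]
    (I : Ω → Fin N) (hI : Measurable I)
    (hIlaw : ∀ j : Fin N, P {ω | I ω = j} = ENNReal.ofReal (p j))
    (ξ : Ω → ℝ) (hξint : Integrable ξ P)
    (hξ0 : ∫ ω, ξ ω ∂P = 0)
    (hindep : IndepFun I ξ P) :
    (∫ ω, s (I ω) i * (s (I ω) i * ℓi + (1 - s (I ω) i) * ξ ω) /
        ((∑ j, p j * (s j i) ^ 2) + γ) ∂P =
      (∑ j, p j * (s j i) ^ 2) * ℓi / ((∑ j, p j * (s j i) ^ 2) + γ)) ∧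
    (∑ j, p j * (s j i) ^ 2) * ℓi / ((∑ j, p j * (s j i) ^ 2) + γ) ≤ ℓi := by
  set A := ∑ j, p j * (s j i) ^ 2
  have hA : 0 ≤ A := Finset.sum_nonneg fun j _ => mul_nonneg (hp j) (sq_nonneg _)
  set signal : Fin N → ℝ := fun j => s j i ^ 2 * ℓi
  set noise_gain : Fin N → ℝ := fun j => s j i * (1 - s j i)
  refine ⟨?_, mul_div_add_le hA hℓ hγ⟩
  calc ∫ ω, s (I ω) i * (s (I ω) i * ℓi + (1 - s (I ω) i) * ξ ω) / (A + γ) ∂P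
      = (∫ ω, (s (I ω) i ^ 2 * ℓi + s (I ω) i * (1 - s (I ω) i) * ξ ω) ∂P) / (A + γ) := by
        rw [← integral_div]
        congr 1 with ω
        ring
    _ = A * ℓi / (A + γ) := by
        rw [integral_add (integrable_comp_of_finite hI signal)
            (integrable_comp_mul_of_indepFun hI hξint hindep noise_gain),
          integral_comp_eq_sum_of_law hI hp hIlaw signal,
          integral_comp_mul_eq_zero_of_indepFun hI hξint hξ0 hindep noise_gain, add_zero,
          Finset.sum_mul]
        simp only [signal, mul_assoc]

/-- **Optimism of the Exp3-WIX loss estimates.**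
The learner draws `I ∼ p`, receives the noisy observation
`c_i = s_{I,i} ℓ_i + (1 − s_{I,i}) ξ_i` (with zero-mean noise `ξ_i`
independent of `I`) and forms the estimate
`ℓ̂_i = s_{I,i} c_i / (Σ_j p_j s_{j,i}² + γ)`.  Then
`E[ℓ̂_i] = (Σ_j p_j s_{j,i}²) ℓ_i / (Σ_j p_j s_{j,i}² + γ) ≤ ℓ_i`:
the estimate lower-bounds the true loss in expectation. -/
theorem wix_estimates_optimistic
    (N : ℕ) (hN : 1 ≤ N)
    (s : Fin N → Fin N → ℝ) (hs : ∀ j i, s j i ∈ Set.Icc (0 : ℝ) 1)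
    (i : Fin N) (ℓi : ℝ) (hℓ : 0 ≤ ℓi)
    (p : Fin N → ℝ) (hp : ∀ j, 0 ≤ p j) (hp1 : ∑ j, p j = 1)
    (γ : ℝ) (hγ : 0 < γ)
    (Ω : Type) [MeasurableSpace Ω] (P : Measure Ω) [IsProbabilityMeasure P]
    (I : Ω → Fin N) (hI : Measurable I)
    (hIlaw : ∀ j : Fin N, P {ω | I ω = j} = ENNReal.ofReal (p j))
    (ξ : Ω → ℝ) (hξmeas : Measurable ξ) (hξint : Integrable ξ P)
    (hξ0 : ∫ ω, ξ ω ∂P = 0)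
    (hindep : IndepFun I ξ P) :
    (∫ ω, s (I ω) i * (s (I ω) i * ℓi + (1 - s (I ω) i) * ξ ω) /
        ((∑ j, p j * (s j i) ^ 2) + γ) ∂P =
      (∑ j, p j * (s j i) ^ 2) * ℓi / ((∑ j, p j * (s j i) ^ 2) + γ)) ∧
    (∑ j, p j * (s j i) ^ 2) * ℓi / ((∑ j, p j * (s j i) ^ 2) + γ) ≤ ℓi :=
  wix_estimates_optimistic_general N s i ℓi hℓ p hp γ hγ Ω P I hI hIlaw ξ hξint hξ0 hindep
end

section
/- Probability-ratio sum bounded by the independence number. Let G be an undirected graph on a finite vertex set V with independence number α(G), and let p : V → ℝ≥0 satisfy Σ_{v∈V} p_v = 1. Then Σ_{v∈V} p_v / ( p_v + Σ_{u : u∼v} p_u ) ≤ α(G), where u∼v denotes adjacency in G (so the denominator is the total probability of the closed neighborhood of v), and any term whose denominator vanishes is interpreted as 0 (its numerator then also vanishes). -/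
/-!
Greedy argument. Among the vertices of positive weight pick `w` whose closed neighbourhood
is lightest. Every vertex `u` of that neighbourhood has a closed neighbourhood at least as
heavy, so the neighbourhood of `w` contributes at most `P(N[w]) / P(N[w]) = 1` to the sum.
Delete `N[w]` and recurse: shrinking the vertex set only shrinks the remaining denominators,
and the chosen vertices form an independent set, one vertex per unit of the sum.
-/

open Finset

lemma div_le_div_of_le_of_le {a b c : ℝ} (ha : 0 ≤ a) (hab : a ≤ b) (hbc : b ≤ c) :
    a / c ≤ a / b := by
  rcases ha.eq_or_lt with rfl | ha
  · simp
  · exact div_le_div_of_nonneg_left ha.le (ha.trans_le hab) hbc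

namespace SimpleGraph

variable {V : Type*} {G : SimpleGraph V}

lemma isIndepSet_insert_of_forall_not_adj {w : V} {T : Set V} (hT : G.IsIndepSet T)
    (hw : ∀ u ∈ T, ¬ G.Adj w u) : G.IsIndepSet (insert w T) :=
  Set.pairwise_insert.2 ⟨hT, fun u hu _ ↦ ⟨hw u hu, fun h ↦ hw u hu h.symm⟩⟩

variable [DecidableEq V] (G) [DecidableRel G.Adj]

def closedNbhdIn (S : Finset V) (v : V) : Finset V := {u ∈ S | u = v ∨ G.Adj v u}

def closedNbhdWeight (p : V → ℝ) (S : Finset V) (v : V) : ℝ := ∑ u ∈ G.closedNbhdIn S v, p u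

variable {G} {p : V → ℝ} {S T : Finset V} {v : V}

lemma self_mem_closedNbhdIn (hv : v ∈ S) : v ∈ G.closedNbhdIn S v := by
  simp [closedNbhdIn, hv]

lemma closedNbhdIn_subset : G.closedNbhdIn S v ⊆ S := filter_subset _ _

lemma closedNbhdIn_mono (hST : S ⊆ T) : G.closedNbhdIn S v ⊆ G.closedNbhdIn T v :=
  filter_subset_filter _ hST

lemma closedNbhdIn_univ [Fintype V] : G.closedNbhdIn univ v = insert v (G.neighborFinset v) := by
  ext u
  simp [closedNbhdIn, eq_comm]

lemma le_closedNbhdWeight (hp : ∀ u, 0 ≤ p u) (hv : v ∈ S) : p v ≤ G.closedNbhdWeight p S v :=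
  single_le_sum (fun u _ ↦ hp u) (self_mem_closedNbhdIn hv)

lemma closedNbhdWeight_mono (hp : ∀ u, 0 ≤ p u) (hST : S ⊆ T) :
    G.closedNbhdWeight p S v ≤ G.closedNbhdWeight p T v :=
  sum_le_sum_of_subset_of_nonneg (closedNbhdIn_mono hST) fun u _ _ ↦ hp u

lemma closedNbhdWeight_univ [Fintype V] :
    G.closedNbhdWeight p univ v = p v + ∑ u ∈ G.neighborFinset v, p u := by
  rw [closedNbhdWeight, closedNbhdIn_univ, sum_insert (by simp)]

lemma sum_div_closedNbhdWeight_anti (hp : ∀ u, 0 ≤ p u) (hST : S ⊆ T) :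
    ∑ v ∈ S, p v / G.closedNbhdWeight p T v ≤ ∑ v ∈ S, p v / G.closedNbhdWeight p S v :=
  sum_le_sum fun v hv ↦
    div_le_div_of_le_of_le (hp v) (le_closedNbhdWeight hp hv) (closedNbhdWeight_mono hp hST)

lemma sum_closedNbhdIn_div_closedNbhdWeight_le_one (hp : ∀ u, 0 ≤ p u) {w : V} (hw : w ∈ S)
    (hpw : 0 < p w)
    (hmin : ∀ u ∈ S, 0 < p u → G.closedNbhdWeight p S w ≤ G.closedNbhdWeight p S u) :
    ∑ u ∈ G.closedNbhdIn S w, p u / G.closedNbhdWeight p S u ≤ 1 := by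
  have hpos : 0 < G.closedNbhdWeight p S w := hpw.trans_le (le_closedNbhdWeight hp hw)
  calc ∑ u ∈ G.closedNbhdIn S w, p u / G.closedNbhdWeight p S u
      ≤ ∑ u ∈ G.closedNbhdIn S w, p u / G.closedNbhdWeight p S w := by
        refine sum_le_sum fun u hu ↦ ?_
        rcases (hp u).eq_or_lt with hpu | hpu
        · simp [← hpu]
        · exact div_le_div_of_nonneg_left hpu.le hpos (hmin u (closedNbhdIn_subset hu) hpu)
    _ = 1 := by rw [← sum_div, ← closedNbhdWeight, div_self hpos.ne']

theorem exists_isIndepSet_sum_div_closedNbhdWeight_le (hp : ∀ u, 0 ≤ p u) (S : Finset V) :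
    ∃ T ⊆ S, G.IsIndepSet T ∧ ∑ v ∈ S, p v / G.closedNbhdWeight p S v ≤ #T := by
  induction S using strongInduction with
  | H S ih =>
  by_cases hsupp : ∃ v ∈ S, 0 < p v
  swap
  · push Not at hsupp
    refine ⟨∅, empty_subset _, by simp, ?_⟩
    rw [sum_eq_zero fun v hv ↦ by rw [le_antisymm (hsupp v hv) (hp v), zero_div]]
    simp
  obtain ⟨w, hw, hmin⟩ := exists_min_image {v ∈ S | 0 < p v} (G.closedNbhdWeight p S)
    (by simpa [Finset.Nonempty] using hsupp)
  rw [mem_filter] at hw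
  set N := G.closedNbhdIn S w
  have hwN : w ∈ N := self_mem_closedNbhdIn hw.1
  obtain ⟨T, hTS, hT, hsumT⟩ :=
    ih (S \ N) (sdiff_ssubset closedNbhdIn_subset ⟨w, hwN⟩)
  have hwT : ∀ u ∈ (T : Set V), ¬ G.Adj w u := fun u hu hwu ↦
    (mem_sdiff.1 (hTS hu)).2 (mem_filter.2 ⟨(mem_sdiff.1 (hTS hu)).1, .inr hwu⟩)
  refine ⟨insert w T, insert_subset hw.1 (hTS.trans sdiff_subset), ?_, ?_⟩
  · rw [coe_insert]
    exact isIndepSet_insert_of_forall_not_adj hT hwT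
  have hN : ∑ u ∈ N, p u / G.closedNbhdWeight p S u ≤ 1 :=
    sum_closedNbhdIn_div_closedNbhdWeight_le_one hp hw.1 hw.2
      fun u hu hpu ↦ hmin u (mem_filter.2 ⟨hu, hpu⟩)
  have hrest := (sum_div_closedNbhdWeight_anti hp (sdiff_subset : S \ N ⊆ S)).trans hsumT
  rw [← sum_sdiff (closedNbhdIn_subset : N ⊆ S),
    card_insert_of_notMem fun h ↦ (mem_sdiff.1 (hTS h)).2 hwN]
  push_cast
  linarith

end SimpleGraph

theorem probability_ratio_sum_le_independence_number_general
    (V : Type) [Fintype V] (G : SimpleGraph V) [DecidableRel G.Adj]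
    (p : V → ℝ) (hp : ∀ v, 0 ≤ p v)
    (α : ℕ)
    (hα : IsGreatest
      {n : ℕ | ∃ S : Finset V, (∀ a ∈ S, ∀ b ∈ S, ¬ G.Adj a b) ∧ S.card = n} α) :
    ∑ v, p v / (p v + ∑ u ∈ G.neighborFinset v, p u) ≤ (α : ℝ) := by
  classical
  obtain ⟨T, -, hT, hsum⟩ := G.exists_isIndepSet_sum_div_closedNbhdWeight_le hp univ
  have hTα : #T ≤ α := hα.2 ⟨T, fun a ha b hb hab ↦ hT ha hb (G.ne_of_adj hab) hab, rfl⟩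
  simp only [SimpleGraph.closedNbhdWeight_univ] at hsum
  exact hsum.trans (by exact_mod_cast hTα)

/-- **Probability-ratio sum bounded by the independence number.**
Let `G` be an undirected graph on a finite vertex set `V` with independence
number `α`, and let `p : V → ℝ≥0` sum to one.  Then
`Σ_v p_v / (p_v + Σ_{u ∼ v} p_u) ≤ α`, where the denominator is the total
probability of the closed neighborhood of `v` (in Lean, a term with vanishing
denominator is `0`, matching the stated convention since its numerator also
vanishes). -/
theorem probability_ratio_sum_le_independence_number
    (V : Type) [Fintype V] (G : SimpleGraph V) [DecidableRel G.Adj]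
    (p : V → ℝ) (hp : ∀ v, 0 ≤ p v) (hp1 : ∑ v, p v = 1)
    (α : ℕ)
    (hα : IsGreatest
      {n : ℕ | ∃ S : Finset V, (∀ a ∈ S, ∀ b ∈ S, ¬ G.Adj a b) ∧ S.card = n} α) :
    ∑ v, p v / (p v + ∑ u ∈ G.neighborFinset v, p u) ≤ (α : ℝ) :=
  probability_ratio_sum_le_independence_number_general V G p hp α hα
end
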